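/- Let n be a nonnegative integer and let a, c be complex numbers with (a−n)_{2n} ≠ 0, (1−a)_n ≠ 0, (1+c)_{2n} ≠ 0, and (1+c−a)_n ≠ 0. Then the sum of the first n+1 terms of the series _3F_2(a, a−c−n, c ; (a−n)/2, (1+a−n)/2 ; 1/4), namely Σ_{k=0}^{n} [(a)_k (a−c−n)_k (c)_k / (k! ((a−n)/2)_k ((1+a−n)/2)_k)] (1/4)^k, equals [(1+c−a)_n (1+c)_n / (n! (1−a)_n)] · _4F_3(−n, 1+c+n, c, 1 ; (1+c)/2, (2+c)/2, 1+c−a ; 1/4). -/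

import Mathlib

open Finset

/-- The rising factorial (Pochhammer symbol) `(a)_k = a(a+1)⋯(a+k-1)`. -/
noncomputable def poch (a : ℂ) (k : ℕ) : ℂ := ∏ i ∈ Finset.range k, (a + i)

/-
Put b = a - n and x = a - c - n. The duplication formula
(b/2)_k ((b+1)/2)_k 4^k = (b)_{2k} and (b)_n (a)_k = (b)_{2k} (b+2k)_{n-k} turn (b)_n times the k-th
term of the ₃F₂ into (x+c+2k)_{n-k} (x)_k (c)_k / k!. Similarly, with the reflection formula
(1-x-m)_m = (-1)^m (x)_m, (b)_n times the (n-k)-th term of the right-hand side becomes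
(1+c+2(n-k))_k (x)_k (c)_{n-k} / k!. Expanding the first Pochhammer symbol on each side by
Chu–Vandermonde writes both sums over the compositions n = k + i + j, with the common summand
(i+j)! / (i! j! k!) · (x)_{k+i} (c)_{k+j}.
-/

open scoped Nat

lemma poch_succ (a : ℂ) (k : ℕ) : poch a (k + 1) = poch a k * (a + k) :=
  prod_range_succ _ _

lemma poch_add (a : ℂ) (m k : ℕ) : poch a (m + k) = poch a m * poch (a + m) k := by
  simp only [poch, prod_range_add, Nat.cast_add, add_assoc]

lemma poch_ne_zero_of_le {a : ℂ} {m n : ℕ} (h : poch a n ≠ 0) (hmn : m ≤ n) : poch a m ≠ 0 := by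
  obtain ⟨d, rfl⟩ := Nat.exists_eq_add_of_le hmn
  rw [poch_add] at h
  exact left_ne_zero_of_mul h

lemma poch_eq_eval_ascPochhammer (a : ℂ) (k : ℕ) : poch a k = (ascPochhammer ℂ k).eval a := by
  induction k with
  | zero => simp [poch]
  | succ k ih => rw [poch_succ, ih, ascPochhammer_succ_eval]

lemma poch_one (k : ℕ) : poch 1 k = k ! := by
  rw [poch_eq_eval_ascPochhammer, ascPochhammer_eval_one]

lemma poch_natCast_add_one (q j : ℕ) : poch (q + 1) j = (q + j)! / q ! := by
  rw [eq_div_iff (Nat.cast_ne_zero.mpr q.factorial_ne_zero), mul_comm, poch_eq_eval_ascPochhammer]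
  exact_mod_cast factorial_mul_ascPochhammer ℂ q j

lemma poch_one_sub_sub (x : ℂ) (m : ℕ) : poch (1 - x - m) m = (-1) ^ m * poch x m := by
  calc poch (1 - x - m) m = ∏ i ∈ range m, (-1) * (x + i) := by
        rw [poch, ← prod_range_reflect]
        refine prod_congr rfl fun i hi => ?_
        have hi : i < m := mem_range.mp hi
        push_cast [Nat.cast_sub (show i ≤ m - 1 by omega), Nat.cast_sub (show 1 ≤ m by omega)]
        ring
    _ = (-1) ^ m * poch x m := by rw [prod_mul_distrib, prod_const, card_range, poch]

lemma poch_neg_natCast {n j : ℕ} (hj : j ≤ n) : poch (-n) j = (-1) ^ j * n ! / (n - j)! := by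
  have h := poch_one_sub_sub ((n - j : ℕ) + 1) j
  rw [show 1 - ((n - j : ℕ) + 1 : ℂ) - j = -n by push_cast [Nat.cast_sub hj]; ring,
    poch_natCast_add_one, Nat.sub_add_cancel hj] at h
  rw [h, mul_div_assoc]

lemma poch_half_mul_poch_half_add (x : ℂ) (k : ℕ) :
    poch (x / 2) k * poch ((x + 1) / 2) k * 4 ^ k = poch x (2 * k) := by
  induction k with
  | zero => simp [poch]
  | succ k ih =>
    rw [Nat.mul_succ, poch_succ, poch_succ, poch_succ, poch_succ, ← ih]
    push_cast
    ring

lemma poch_half_ne_zero {x : ℂ} {k : ℕ} (h : poch x (2 * k) ≠ 0) :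
    poch (x / 2) k ≠ 0 ∧ poch ((x + 1) / 2) k ≠ 0 := by
  rw [← poch_half_mul_poch_half_add] at h
  exact ⟨left_ne_zero_of_mul (left_ne_zero_of_mul h), right_ne_zero_of_mul (left_ne_zero_of_mul h)⟩

lemma poch_mul_poch_add_eq {k n : ℕ} (b : ℂ) (hk : k ≤ n) :
    poch b n * poch (b + n) k = poch b (2 * k) * poch (b + 2 * k) (n - k) := by
  rw [← poch_add, show (2 * k : ℂ) = (2 * k : ℕ) by push_cast; ring, ← poch_add]
  congr 1
  omega

/-- Chu–Vandermonde, transferred from `Ring.descPochhammer_smeval_add` through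
`(w)_k = (-1)^k (-w)(-w-1)⋯(-w-k+1)`. -/
lemma poch_add_eq_sum_antidiagonal (u v : ℂ) (m : ℕ) :
    poch (u + v) m = ∑ p ∈ antidiagonal m, (m.choose p.1 : ℂ) * poch u p.1 * poch v p.2 := by
  have hneg (w : ℂ) (k : ℕ) : poch w k = (-1) ^ k * (descPochhammer ℤ k).smeval (-w) := by
    rw [poch_eq_eval_ascPochhammer, ← Polynomial.ascPochhammer_smeval_eq_eval, ← neg_neg w,
      Polynomial.ascPochhammer_smeval_neg_eq_descPochhammer, neg_neg, Units.smul_def,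
      Int.coe_negOnePow_natCast, zsmul_eq_mul]
    push_cast
    rfl
  rw [hneg, neg_add, Ring.descPochhammer_smeval_add _ (Commute.all _ _), mul_sum]
  refine sum_congr rfl fun p hp => ?_
  rw [hneg u, hneg v, ← mem_antidiagonal.mp hp]
  ring

lemma sum_antidiagonal_sum_antidiagonal_assoc {M : Type*} [AddCommMonoid M] (n : ℕ)
    (f : ℕ → ℕ → ℕ → M) :
    ∑ p ∈ antidiagonal n, ∑ q ∈ antidiagonal p.2, f p.1 q.1 q.2 =
      ∑ p ∈ antidiagonal n, ∑ q ∈ antidiagonal p.1, f q.1 q.2 p.2 := by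
  simp only [sum_sigma']
  apply sum_nbij' (fun ⟨⟨i, _⟩, ⟨j, k⟩⟩ ↦ ⟨(i + j, k), (i, j)⟩)
    (fun ⟨⟨_, k⟩, ⟨i, j⟩⟩ ↦ ⟨(i, j + k), (j, k)⟩) <;> aesop (add simp [add_assoc])

lemma choose_div_factorial_eq (i j q : ℕ) :
    ((j + q).choose j : ℂ) / i ! = ((i + j).choose i : ℂ) * poch (q + 1) j / (i + j)! := by
  rw [Nat.cast_add_choose, Nat.cast_add_choose, poch_natCast_add_one, add_comm q j]
  field_simp [Nat.factorial_ne_zero]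

theorem sum_antidiagonal_poch_eq (x c : ℂ) (n : ℕ) :
    ∑ p ∈ antidiagonal n, poch (x + c + 2 * p.1) p.2 * poch x p.1 * poch c p.1 / p.1 ! =
      ∑ p ∈ antidiagonal n, poch (1 + c + 2 * p.2) p.1 * poch x p.1 * poch c p.2 / p.1 ! := by
  let F (k i j : ℕ) : ℂ := ((i + j).choose i : ℂ) * poch x (k + i) * poch c (k + j) / (k ! : ℂ)
  calc _ = ∑ p ∈ antidiagonal n, ∑ q ∈ antidiagonal p.2, F p.1 q.1 q.2 := by
        refine sum_congr rfl fun p _ => ?_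
        rw [show x + c + 2 * (p.1 : ℂ) = (x + p.1) + (c + p.1) by ring,
          poch_add_eq_sum_antidiagonal, sum_mul, sum_mul, sum_div]
        refine sum_congr rfl fun q hq => ?_
        rw [← mem_antidiagonal.mp hq]
        simp only [F, poch_add]
        ring
    _ = ∑ p ∈ antidiagonal n, ∑ q ∈ antidiagonal p.1, F q.1 q.2 p.2 :=
        sum_antidiagonal_sum_antidiagonal_assoc n F
    _ = _ := by
        refine sum_congr rfl fun p _ => ?_
        rw [show 1 + c + 2 * (p.2 : ℂ) = (c + p.2) + (p.2 + 1) by ring,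
          poch_add_eq_sum_antidiagonal, sum_mul, sum_mul, sum_div]
        refine sum_congr rfl fun q hq => ?_
        rw [← mem_antidiagonal.mp hq]
        simp only [F]
        rw [add_comm q.1 p.2, poch_add c]
        linear_combination (poch x (q.1 + q.2) * poch c p.2 * poch (c + p.2) q.1) *
          choose_div_factorial_eq q.1 q.2 p.2

lemma term3F2_eq {n k : ℕ} (a c : ℂ) (han : poch (a - n) (2 * n) ≠ 0) (hk : k ≤ n) :
    poch a k * poch (a - c - n) k * poch c k /
        (k ! * poch ((a - n) / 2) k * poch ((1 + a - n) / 2) k) * (1 / 4) ^ k =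
      (poch (a - n) n)⁻¹ * (poch (a - n + 2 * k) (n - k) * poch (a - c - n) k * poch c k / k !) := by
  have hdup := poch_half_mul_poch_half_add (a - n) k
  have hsplit := poch_mul_poch_add_eq (a - n) hk
  rw [sub_add_cancel] at hsplit
  have hn : poch (a - n) n ≠ 0 := poch_ne_zero_of_le han (by omega)
  obtain ⟨h₁, h₂⟩ := poch_half_ne_zero (poch_ne_zero_of_le han (show 2 * k ≤ 2 * n by omega))
  rw [show (1 + a - n) / 2 = (a - n + 1) / 2 by ring, one_div, inv_pow]
  field_simp [Nat.factorial_ne_zero]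
  linear_combination (poch (a - c - n) k * poch c k) * hsplit
    - (poch (a - c - n) k * poch c k * poch (a - n + 2 * k) (n - k)) * hdup

lemma term4F3_eq {n j : ℕ} (a c : ℂ) (han : poch (a - n) (2 * n) ≠ 0)
    (hc2 : poch (1 + c) (2 * n) ≠ 0) (hca : poch (1 + c - a) n ≠ 0) (hj : j ≤ n) :
    poch (1 + c - a) n * poch (1 + c) n / (n ! * poch (1 - a) n) *
        (poch (-n) j * poch (1 + c + n) j * poch c j * poch 1 j /
          (j ! * poch ((1 + c) / 2) j * poch ((2 + c) / 2) j * poch (1 + c - a) j) * (1 / 4) ^ j) =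
      (poch (a - n) n)⁻¹ *
        (poch (1 + c + 2 * j) (n - j) * poch (a - c - n) (n - j) * poch c j / (n - j)!) := by
  have hreflect_a : poch (1 - a) n = (-1) ^ n * poch (a - n) n := by
    rw [← poch_one_sub_sub]
    ring_nf
  have hreflect_n : poch (1 + c - a) n = (-1) ^ n * poch (a - c - n) n := by
    rw [← poch_one_sub_sub]
    ring_nf
  have hreflect_j : poch (1 + c - a) j = (-1) ^ j * poch (a - c - n + (n - j : ℕ)) j := by
    rw [← poch_one_sub_sub]
    push_cast [Nat.cast_sub hj]
    ring_nf
  have hsplit_x :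
      poch (a - c - n) n = poch (a - c - n) (n - j) * poch (a - c - n + (n - j : ℕ)) j := by
    rw [← poch_add, Nat.sub_add_cancel hj]
  have hsplit_c := poch_mul_poch_add_eq (1 + c) hj
  have hdup := poch_half_mul_poch_half_add (1 + c) j
  have hn : poch (a - n) n ≠ 0 := poch_ne_zero_of_le han (by omega)
  obtain ⟨h₁, h₂⟩ := poch_half_ne_zero (poch_ne_zero_of_le hc2 (show 2 * j ≤ 2 * n by omega))
  have hx : poch (a - c - n + (n - j : ℕ)) j ≠ 0 := by
    have := poch_ne_zero_of_le hca hj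
    rw [hreflect_j] at this
    exact right_ne_zero_of_mul this
  rw [hreflect_a, hreflect_n, hreflect_j, hsplit_x, poch_neg_natCast hj, poch_one,
    show (2 + c) / 2 = (1 + c + 1) / 2 by ring, one_div, inv_pow]
  field_simp [Nat.factorial_ne_zero]
  linear_combination (poch (a - c - n) (n - j) * poch c j) * hsplit_c
    - (poch (a - c - n) (n - j) * poch c j * poch (1 + c + 2 * j) (n - j)) * hdup

theorem stmt_19_general (n : ℕ) (a c : ℂ)
    (han : poch (a - (n : ℂ)) (2 * n) ≠ 0)
    (hc2 : poch (1 + c) (2 * n) ≠ 0) (hca : poch (1 + c - a) n ≠ 0) :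
    ∑ k ∈ range (n + 1),
      (poch a k * poch (a - c - (n : ℂ)) k * poch c k) /
        ((Nat.factorial k : ℂ) * poch ((a - (n : ℂ)) / 2) k *
          poch ((1 + a - (n : ℂ)) / 2) k) * (1 / 4 : ℂ) ^ k
    = poch (1 + c - a) n * poch (1 + c) n / ((Nat.factorial n : ℂ) * poch (1 - a) n) *
      ∑ k ∈ range (n + 1),
        (poch (-(n : ℂ)) k * poch (1 + c + (n : ℂ)) k * poch c k * poch 1 k) /
          ((Nat.factorial k : ℂ) * poch ((1 + c) / 2) k * poch ((2 + c) / 2) k *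
            poch (1 + c - a) k) * (1 / 4 : ℂ) ^ k := by
  have key := sum_antidiagonal_poch_eq (a - c - n) c n
  rw [show a - c - n + c = a - n by ring] at key
  calc _ = (poch (a - n) n)⁻¹ * ∑ p ∈ antidiagonal n,
          poch (a - n + 2 * p.1) p.2 * poch (a - c - n) p.1 * poch c p.1 / p.1 ! := by
        rw [Nat.sum_antidiagonal_eq_sum_range_succ
          (fun i j => poch (a - n + 2 * i) j * poch (a - c - n) i * poch c i / i !), mul_sum]
        exact sum_congr rfl fun k hk => term3F2_eq a c han (by simpa [Nat.lt_succ_iff] using hk)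
    _ = (poch (a - n) n)⁻¹ * ∑ p ∈ antidiagonal n,
          poch (1 + c + 2 * p.2) p.1 * poch (a - c - n) p.1 * poch c p.2 / p.1 ! := by
        rw [key]
    _ = _ := by
        rw [← Nat.sum_antidiagonal_swap]
        simp only [Prod.fst_swap, Prod.snd_swap]
        rw [Nat.sum_antidiagonal_eq_sum_range_succ
          (fun i j => poch (1 + c + 2 * i) j * poch (a - c - n) j * poch c i / j !), mul_sum,
          mul_sum]
        exact sum_congr rfl fun j hj =>
          (term4F3_eq a c han hc2 hca (by simpa [Nat.lt_succ_iff] using hj)).symm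

theorem stmt_19 (n : ℕ) (a c : ℂ)
    (han : poch (a - (n : ℂ)) (2 * n) ≠ 0) (h1a : poch (1 - a) n ≠ 0)
    (hc2 : poch (1 + c) (2 * n) ≠ 0) (hca : poch (1 + c - a) n ≠ 0) :
    ∑ k ∈ range (n + 1),
      (poch a k * poch (a - c - (n : ℂ)) k * poch c k) /
        ((Nat.factorial k : ℂ) * poch ((a - (n : ℂ)) / 2) k *
          poch ((1 + a - (n : ℂ)) / 2) k) * (1 / 4 : ℂ) ^ k
    = poch (1 + c - a) n * poch (1 + c) n / ((Nat.factorial n : ℂ) * poch (1 - a) n) *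
      ∑ k ∈ range (n + 1),
        (poch (-(n : ℂ)) k * poch (1 + c + (n : ℂ)) k * poch c k * poch 1 k) /
          ((Nat.factorial k : ℂ) * poch ((1 + c) / 2) k * poch ((2 + c) / 2) k *
            poch (1 + c - a) k) * (1 / 4 : ℂ) ^ k :=
  stmt_19_general n a c han hc2 hca
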